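/- arXiv:1105.1277 — 8 statements merged into one kernel-verified Lean document; each statement's English description precedes it below -/
import Mathlib

section
/- Let (N₁,γ₁) and (N₂,γ₂) be two ch-sets with cones, where γ₂ = (a₂,b₂,c₂), and let g be a continuous map defined on N₁ such that for any q*, q** ∈ N₁ with q* ≠ q** and Q_{γ₁}(q* − q**) ≥ 0 one has Q_{γ₂}(g(q*) − g(q**)) > 0. Then for every horizontal disc h in (N₁,γ₁) the map x ↦ π_x(g(h(x))) is injective on B̄_u(x₁,r_u¹). -/
open Metric Set

noncomputable section

abbrev Eu (n : ℕ) : Type := EuclideanSpace ℝ (Fin n)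

abbrev Pt (u s c : ℕ) : Type := Eu u × Eu s × Eu c

/-- The quadratic form `Q_γ(q) = a‖x‖² + b‖y‖² + c‖θ‖²` for `γ = (a,b,c)`, `q = (x,y,θ)`. -/
def Qf {u s c : ℕ} (γ : ℝ × ℝ × ℝ) (q : Pt u s c) : ℝ :=
  γ.1 * ‖q.1‖ ^ 2 + γ.2.1 * ‖q.2.1‖ ^ 2 + γ.2.2 * ‖q.2.2‖ ^ 2

/-- The ch-set `N(p,r_u,r_s,r_c) = B̄_u(x,r_u) × B̄_s(y,r_s) × B̄_c(θ,r_c)`. -/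
def chSet {u s c : ℕ} (p : Pt u s c) (R : ℝ × ℝ × ℝ) : Set (Pt u s c) :=
  closedBall p.1 R.1 ×ˢ closedBall p.2.1 R.2.1 ×ˢ closedBall p.2.2 R.2.2

/-- The exit set `N⁻`. -/
def chExit {u s c : ℕ} (p : Pt u s c) (R : ℝ × ℝ × ℝ) : Set (Pt u s c) :=
  sphere p.1 R.1 ×ˢ closedBall p.2.1 R.2.1 ×ˢ closedBall p.2.2 R.2.2

/-- The entry set `N⁺`. -/
def chEntry {u s c : ℕ} (p : Pt u s c) (R : ℝ × ℝ × ℝ) : Set (Pt u s c) :=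
  closedBall p.1 R.1 ×ˢ (ball p.2.1 R.2.1 ×ˢ ball p.2.2 R.2.2)ᶜ

/-- `γ = (a,b,c)` is an admissible cone parameter: `a > 0`, `b,c < 0`. -/
def ConePar (γ : ℝ × ℝ × ℝ) : Prop := 0 < γ.1 ∧ γ.2.1 < 0 ∧ γ.2.2 < 0

/-- `N₁ = N(p₁,R₁)` `g`-covers `N₂ = N(p₂,R₂)`. -/
def Covers {u s c : ℕ} (g : Pt u s c → Pt u s c) (p₁ : Pt u s c) (R₁ : ℝ × ℝ × ℝ)
    (p₂ : Pt u s c) (R₂ : ℝ × ℝ × ℝ) : Prop :=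
  g p₁ ∈ interior (chSet p₂ R₂) ∧
  (∀ q ∈ chExit p₁ R₁, (g q).1 ∉ closedBall p₂.1 R₂.1) ∧
  (∀ q ∈ chSet p₁ R₁, g q ∉ chEntry p₂ R₂)

/-- `h` is a horizontal disc in the ch-set with cones `(N(p,R), γ)`. -/
def HorDisc {u s c : ℕ} (h : Eu u → Pt u s c) (p : Pt u s c) (R : ℝ × ℝ × ℝ)
    (γ : ℝ × ℝ × ℝ) : Prop :=
  ContinuousOn h (closedBall p.1 R.1) ∧
  (∀ x ∈ closedBall p.1 R.1, h x ∈ chSet p R) ∧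
  (∀ x ∈ closedBall p.1 R.1, (h x).1 = x) ∧
  (∀ x₁ ∈ closedBall p.1 R.1, ∀ x₂ ∈ closedBall p.1 R.1, 0 ≤ Qf γ (h x₁ - h x₂))

/-!
If `π_x g(h x₁) = π_x g(h x₂)`, the difference `g(h x₁) - g(h x₂)` has no unstable component,
so `Q_{γ₂}` is nonpositive on it because `b₂, c₂ < 0`. As `h x₁ - h x₂` lies in the `γ₁`-cone,
the cone condition then forces `h x₁ = h x₂`, hence `x₁ = x₂`.
-/

theorem Qf_nonpos_of_fst_eq_zero {u s c : ℕ} {γ : ℝ × ℝ × ℝ} (hb : γ.2.1 ≤ 0) (hc : γ.2.2 ≤ 0)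
    {q : Pt u s c} (hq : q.1 = 0) : Qf γ q ≤ 0 := by
  have hy := mul_nonpos_of_nonpos_of_nonneg hb (sq_nonneg ‖q.2.1‖)
  have hθ := mul_nonpos_of_nonpos_of_nonneg hc (sq_nonneg ‖q.2.2‖)
  simp only [Qf, hq, norm_zero]
  linarith

theorem HorDisc.injOn {u s c : ℕ} {h : Eu u → Pt u s c} {p : Pt u s c} {R γ : ℝ × ℝ × ℝ}
    (hh : HorDisc h p R γ) : InjOn h (closedBall p.1 R.1) := fun x₁ hx₁ x₂ hx₂ heq => by
  rw [← hh.2.2.1 x₁ hx₁, ← hh.2.2.1 x₂ hx₂, heq]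

theorem stmt1_general {u s c : ℕ}
    (p₁ : Pt u s c) (R₁ : ℝ × ℝ × ℝ)
    (γ₁ γ₂ : ℝ × ℝ × ℝ) (hγ₂ : ConePar γ₂)
    (g : Pt u s c → Pt u s c)
    (hcone : ∀ q₁ ∈ chSet p₁ R₁, ∀ q₂ ∈ chSet p₁ R₁, q₁ ≠ q₂ →
      0 ≤ Qf γ₁ (q₁ - q₂) → 0 < Qf γ₂ (g q₁ - g q₂))
    (h : Eu u → Pt u s c) (hh : HorDisc h p₁ R₁ γ₁) :
    Set.InjOn (fun x => (g (h x)).1) (closedBall p₁.1 R₁.1) := by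
  intro x₁ hx₁ x₂ hx₂ hfst
  by_contra hne
  have hQ : Qf γ₂ (g (h x₁) - g (h x₂)) ≤ 0 :=
    Qf_nonpos_of_fst_eq_zero hγ₂.2.1.le hγ₂.2.2.le (sub_eq_zero.mpr hfst)
  exact (hcone _ (hh.2.1 x₁ hx₁) _ (hh.2.1 x₂ hx₂) (hh.injOn.ne hx₁ hx₂ hne)
    (hh.2.2.2 x₁ hx₁ x₂ hx₂)).not_ge hQ

/-- If the cone condition holds for `g` between the ch-sets with cones `(N₁,γ₁)` and `(N₂,γ₂)`,
then for any horizontal disc `h` in `(N₁,γ₁)` the map `x ↦ π_x (g (h x))` is injective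
on `B̄_u(x₁, r_u¹)`. -/
theorem stmt1 {u s c : ℕ}
    (p₁ p₂ : Pt u s c) (R₁ R₂ : ℝ × ℝ × ℝ)
    (hR₁ : 0 < R₁.1 ∧ 0 < R₁.2.1 ∧ 0 < R₁.2.2)
    (hR₂ : 0 < R₂.1 ∧ 0 < R₂.2.1 ∧ 0 < R₂.2.2)
    (γ₁ γ₂ : ℝ × ℝ × ℝ) (hγ₁ : ConePar γ₁) (hγ₂ : ConePar γ₂)
    (g : Pt u s c → Pt u s c) (hg : ContinuousOn g (chSet p₁ R₁))
    (hcone : ∀ q₁ ∈ chSet p₁ R₁, ∀ q₂ ∈ chSet p₁ R₁, q₁ ≠ q₂ →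
      0 ≤ Qf γ₁ (q₁ - q₂) → 0 < Qf γ₂ (g q₁ - g q₂))
    (h : Eu u → Pt u s c) (hh : HorDisc h p₁ R₁ γ₁) :
    Set.InjOn (fun x => (g (h x)).1) (closedBall p₁.1 R₁.1) :=
  stmt1_general p₁ R₁ γ₁ γ₂ hγ₂ g hcone h hh
end
end

section
/- Let γ = (a,b,c) ∈ ℝ³ with a > 0 and b, c < 0, let r > 0 and x₀ ∈ ℝᵘ, and let h : B̄_u(x₀,r) → ℝᵘ×ℝˢ×ℝᶜ be a map with π_x(h(v)) = v for all v and Q_γ(h(v*) − h(v**)) > 0 for all v* ≠ v**. Then for all v*, v** one has min(−b,−c)·‖π_{(y,θ)}h(v*) − π_{(y,θ)}h(v**)‖² ≤ a·‖v* − v**‖²; in particular h is Lipschitz continuous with Lipschitz constant at most √(1 + a/min(−b,−c)). -/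
/-!
On an increment `q = h v₁ - h v₂` we have `q.1 = v₁ - v₂`, and `Q_γ(q) ≥ 0` rearranges to
`-b‖q.2.1‖² - c‖q.2.2‖² ≤ a‖q.1‖²`; replacing `-b` and `-c` by their minimum gives the first
claim. It bounds each of the three components of `q` by `√(1 + a/min(-b,-c)) · ‖v₁ - v₂‖`,
which is the Lipschitz bound for the sup metric on `Pt u s c`.
-/

open Metric Set

noncomputable section

theorem min_neg_mul_le_of_Qf_nonneg {u s c : ℕ} (γ : ℝ × ℝ × ℝ) (q : Pt u s c)
    (hq : 0 ≤ Qf γ q) :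
    min (-γ.2.1) (-γ.2.2) * (‖q.2.1‖ ^ 2 + ‖q.2.2‖ ^ 2) ≤ γ.1 * ‖q.1‖ ^ 2 := by
  unfold Qf at hq
  have hy := mul_le_mul_of_nonneg_right (min_le_left (-γ.2.1) (-γ.2.2)) (sq_nonneg ‖q.2.1‖)
  have hθ := mul_le_mul_of_nonneg_right (min_le_right (-γ.2.1) (-γ.2.2)) (sq_nonneg ‖q.2.2‖)
  linarith

theorem norm_le_sqrt_mul_norm_fst_of_sq_le {E F G : Type*} [SeminormedAddCommGroup E]
    [SeminormedAddCommGroup F] [SeminormedAddCommGroup G] {m a : ℝ} (hm : 0 < m) (ha : 0 ≤ a)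
    (q : E × F × G) (hq : m * (‖q.2.1‖ ^ 2 + ‖q.2.2‖ ^ 2) ≤ a * ‖q.1‖ ^ 2) :
    ‖q‖ ≤ √(1 + a / m) * ‖q.1‖ := by
  have hK : 0 ≤ 1 + a / m := by positivity
  have bound : ∀ w : ℝ, 0 ≤ w → w ^ 2 ≤ (1 + a / m) * ‖q.1‖ ^ 2 → w ≤ √(1 + a / m) * ‖q.1‖ := by
    intro w hw hw2
    rw [← Real.sqrt_sq (norm_nonneg q.1), ← Real.sqrt_mul hK]
    exact (Real.le_sqrt hw (by positivity)).2 hw2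
  have hsum : ‖q.2.1‖ ^ 2 + ‖q.2.2‖ ^ 2 ≤ a / m * ‖q.1‖ ^ 2 := by
    rw [div_mul_eq_mul_div, le_div_iff₀ hm, mul_comm]
    exact hq
  have hy := sq_nonneg ‖q.2.1‖
  have hθ := sq_nonneg ‖q.2.2‖
  have hx := sq_nonneg ‖q.1‖
  rw [Prod.norm_def, Prod.norm_def]
  refine max_le (bound _ (norm_nonneg _) ?_) (max_le (bound _ (norm_nonneg _) ?_)
    (bound _ (norm_nonneg _) ?_)) <;> nlinarith

theorem stmt3_general {u s c : ℕ} (γ : ℝ × ℝ × ℝ) (hγ : ConePar γ) (r : ℝ)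
    (x₀ : Eu u) (h : Eu u → Pt u s c)
    (hproj : ∀ v ∈ closedBall x₀ r, (h v).1 = v)
    (hcone : ∀ v₁ ∈ closedBall x₀ r, ∀ v₂ ∈ closedBall x₀ r, v₁ ≠ v₂ →
      0 < Qf γ (h v₁ - h v₂)) :
    (∀ v₁ ∈ closedBall x₀ r, ∀ v₂ ∈ closedBall x₀ r,
      min (-γ.2.1) (-γ.2.2) *
          (‖(h v₁).2.1 - (h v₂).2.1‖ ^ 2 + ‖(h v₁).2.2 - (h v₂).2.2‖ ^ 2) ≤
        γ.1 * ‖v₁ - v₂‖ ^ 2) ∧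
    LipschitzOnWith
      (Real.toNNReal (Real.sqrt (1 + γ.1 / min (-γ.2.1) (-γ.2.2)))) h (closedBall x₀ r) := by
  obtain ⟨ha, hb, hc⟩ := hγ
  have hm : 0 < min (-γ.2.1) (-γ.2.2) := lt_min (neg_pos.2 hb) (neg_pos.2 hc)
  have hfst : ∀ v₁ ∈ closedBall x₀ r, ∀ v₂ ∈ closedBall x₀ r, (h v₁ - h v₂).1 = v₁ - v₂ :=
    fun v₁ hv₁ v₂ hv₂ => by rw [Prod.fst_sub, hproj v₁ hv₁, hproj v₂ hv₂]
  have key : ∀ v₁ ∈ closedBall x₀ r, ∀ v₂ ∈ closedBall x₀ r,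
      min (-γ.2.1) (-γ.2.2) * (‖(h v₁ - h v₂).2.1‖ ^ 2 + ‖(h v₁ - h v₂).2.2‖ ^ 2) ≤
        γ.1 * ‖(h v₁ - h v₂).1‖ ^ 2 := by
    intro v₁ hv₁ v₂ hv₂
    apply min_neg_mul_le_of_Qf_nonneg
    rcases eq_or_ne v₁ v₂ with rfl | hne
    · simp [Qf]
    · exact (hcone v₁ hv₁ v₂ hv₂ hne).le
  refine ⟨fun v₁ hv₁ v₂ hv₂ => hfst v₁ hv₁ v₂ hv₂ ▸ key v₁ hv₁ v₂ hv₂, ?_⟩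
  refine LipschitzOnWith.of_dist_le_mul fun v₁ hv₁ v₂ hv₂ => ?_
  rw [Real.coe_toNNReal _ (Real.sqrt_nonneg _), dist_eq_norm, dist_eq_norm,
    ← hfst v₁ hv₁ v₂ hv₂]
  exact norm_le_sqrt_mul_norm_fst_of_sq_le hm ha.le _ (key v₁ hv₁ v₂ hv₂)

/-- A map `h` on `B̄_u(x₀,r)` with `π_x ∘ h = id` whose increments lie in the open horizontal
cone `Q_γ > 0` satisfies `min(-b,-c)·‖π_{(y,θ)}Δh‖² ≤ a·‖Δv‖²`; in particular it is
Lipschitz with constant `√(1 + a/min(-b,-c))`. -/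
theorem stmt3 {u s c : ℕ} (γ : ℝ × ℝ × ℝ) (hγ : ConePar γ) (r : ℝ) (hr : 0 < r)
    (x₀ : Eu u) (h : Eu u → Pt u s c)
    (hproj : ∀ v ∈ closedBall x₀ r, (h v).1 = v)
    (hcone : ∀ v₁ ∈ closedBall x₀ r, ∀ v₂ ∈ closedBall x₀ r, v₁ ≠ v₂ →
      0 < Qf γ (h v₁ - h v₂)) :
    (∀ v₁ ∈ closedBall x₀ r, ∀ v₂ ∈ closedBall x₀ r,
      min (-γ.2.1) (-γ.2.2) *
          (‖(h v₁).2.1 - (h v₂).2.1‖ ^ 2 + ‖(h v₁).2.2 - (h v₂).2.2‖ ^ 2) ≤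
        γ.1 * ‖v₁ - v₂‖ ^ 2) ∧
    LipschitzOnWith
      (Real.toNNReal (Real.sqrt (1 + γ.1 / min (-γ.2.1) (-γ.2.2)))) h (closedBall x₀ r) :=
  stmt3_general γ hγ r x₀ h hproj hcone
end
end

section
/- Let r > 0 and let w^s : B̄_s(0,r) → B_u(0,r) and w^u : B̄_u(0,r) → B_s(0,r) be continuous maps (B̄ denotes closed and B open balls in ℝˢ and ℝᵘ). Let a_f > 0 > b_f and a_b < 0 < b_b be real numbers with |a_f| > |a_b| and |b_f| < |b_b|. Assume that for all y* ≠ y** in B̄_s(0,r): a_f·‖w^s(y*) − w^s(y**)‖² + b_f·‖y* − y**‖² < 0, and for all x* ≠ x** in B̄_u(0,r): a_b·‖x* − x**‖² + b_b·‖w^u(x*) − w^u(x**)‖² < 0. Then there exists exactly one pair (x₀,y₀) ∈ B_u(0,r)×B_s(0,r) such that x₀ = w^s(y₀) and y₀ = w^u(x₀). -/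
open Metric Set

noncomputable section

/-!
The cone inequalities say that `w^s` and `w^u` are Lipschitz with constants `√(-b_f / a_f)` and
`√(-a_b / b_b)`, and the conditions `|a_b| < |a_f|`, `|b_f| < |b_b|` make the product of these
constants less than `1`. Hence `w^u ∘ w^s` is a contraction of the complete set `B̄_s(0,r)` and has
a unique fixed point `y₀` there, which lies in `B_s(0,r)` because `w^u` takes values in the open
ball. The pairs sought are exactly `(w^s(y), y)` with `y` a fixed point of `w^u ∘ w^s`.
-/

open Function

theorem lipschitzOnWith_sqrt_of_cone {E F : Type*} [SeminormedAddCommGroup E]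
    [SeminormedAddCommGroup F] {f : E → F} {S : Set E} {a b : ℝ} (ha : 0 < a)
    (h : ∀ x ∈ S, ∀ y ∈ S, x ≠ y → a * ‖f x - f y‖ ^ 2 + b * ‖x - y‖ ^ 2 < 0) :
    LipschitzOnWith (√(-b / a)).toNNReal f S := by
  refine LipschitzOnWith.of_dist_le_mul fun x hx y hy ↦ ?_
  rw [dist_eq_norm, dist_eq_norm, Real.coe_toNNReal _ (Real.sqrt_nonneg _)]
  rcases eq_or_ne x y with rfl | hne
  · simp
  have hsq : ‖f x - f y‖ ^ 2 ≤ -b / a * ‖x - y‖ ^ 2 := by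
    rw [div_mul_eq_mul_div, le_div_iff₀ ha]
    linarith [h x hx y hy hne]
  calc ‖f x - f y‖ = √(‖f x - f y‖ ^ 2) := (Real.sqrt_sq (norm_nonneg _)).symm
    _ ≤ √(-b / a * ‖x - y‖ ^ 2) := Real.sqrt_le_sqrt hsq
    _ = √(-b / a) * ‖x - y‖ := by
      rw [Real.sqrt_mul' _ (sq_nonneg _), Real.sqrt_sq (norm_nonneg _)]

theorem sqrt_mul_sqrt_lt_one_of_abs_lt {af bf ab bb : ℝ} (haf : 0 < af) (hbb : 0 < bb)
    (hA : |ab| < |af|) (hB : |bf| < |bb|) : √(-ab / bb) * √(-bf / af) < 1 := by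
  rw [abs_of_pos haf] at hA
  rw [abs_of_pos hbb] at hB
  calc √(-ab / bb) * √(-bf / af) ≤ √(|ab| / bb) * √(|bf| / af) := by
        gcongr <;> exact neg_le_abs _
    _ = √(|ab| / bb * (|bf| / af)) := (Real.sqrt_mul (by positivity) _).symm
    _ < 1 := by
      rw [Real.sqrt_lt' one_pos, one_pow, div_mul_div_comm, div_lt_one (mul_pos hbb haf)]
      nlinarith [abs_nonneg ab, abs_nonneg bf]

theorem existsUnique_isFixedPt_of_lipschitzOnWith {α : Type*} [MetricSpace α] {f : α → α}
    {s : Set α} {K : NNReal} (hsc : IsComplete s) (hne : s.Nonempty) (hsf : MapsTo f s s)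
    (hK : K < 1) (hf : LipschitzOnWith K f s) : ∃! x, x ∈ s ∧ IsFixedPt f x := by
  have hcontr : ContractingWith K (hsf.restrict f s s) := ⟨hK, hf.mapsToRestrict hsf⟩
  obtain ⟨x, hx⟩ := hne
  obtain ⟨y, hys, hfy, -⟩ := hcontr.exists_fixedPoint' hsc hsf hx (edist_ne_top _ _)
  refine ⟨y, ⟨hys, hfy⟩, fun z ⟨hzs, hfz⟩ ↦ ?_⟩
  exact congrArg Subtype.val
    (hcontr.fixedPoint_unique' (x := ⟨z, hzs⟩) (y := ⟨y, hys⟩) (Subtype.ext hfz) (Subtype.ext hfy))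

theorem existsUnique_mem_graph_inter_of_existsUnique_isFixedPt {α β : Type*} {s : Set α}
    {t : Set β} {g : β → α} {h : α → β} (hg : MapsTo g t s)
    (hfix : ∃! y, y ∈ t ∧ IsFixedPt (h ∘ g) y) :
    ∃! p : α × β, p.1 ∈ s ∧ p.2 ∈ t ∧ p.1 = g p.2 ∧ p.2 = h p.1 := by
  obtain ⟨y, ⟨hy, hfy⟩, huniq⟩ := hfix
  refine ⟨(g y, y), ⟨hg hy, hy, rfl, hfy.symm⟩, ?_⟩
  rintro ⟨x', y'⟩ ⟨-, hy', hxy, hyx⟩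
  have hfy' : h (g y') = y' := by rw [← hxy, ← hyx]
  obtain rfl := huniq y' ⟨hy', hfy'⟩
  exact Prod.ext hxy rfl

theorem stmt7_general {u s : ℕ} (r : ℝ) (hr : 0 < r)
    (ws : Eu s → Eu u) (wu : Eu u → Eu s)
    (hwsm : MapsTo ws (closedBall 0 r) (ball 0 r))
    (hwum : MapsTo wu (closedBall 0 r) (ball 0 r))
    (af bf ab bb : ℝ) (haf : 0 < af) (hbb : 0 < bb)
    (hA : |ab| < |af|) (hB : |bf| < |bb|)
    (hs : ∀ y₁ ∈ closedBall (0 : Eu s) r, ∀ y₂ ∈ closedBall (0 : Eu s) r, y₁ ≠ y₂ →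
      af * ‖ws y₁ - ws y₂‖ ^ 2 + bf * ‖y₁ - y₂‖ ^ 2 < 0)
    (hu : ∀ x₁ ∈ closedBall (0 : Eu u) r, ∀ x₂ ∈ closedBall (0 : Eu u) r, x₁ ≠ x₂ →
      ab * ‖x₁ - x₂‖ ^ 2 + bb * ‖wu x₁ - wu x₂‖ ^ 2 < 0) :
    ∃! p : Eu u × Eu s, p.1 ∈ ball (0 : Eu u) r ∧ p.2 ∈ ball (0 : Eu s) r ∧
      p.1 = ws p.2 ∧ p.2 = wu p.1 := by
  have hws := hwsm.mono_right ball_subset_closedBall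
  have hwu_lip : LipschitzOnWith (√(-ab / bb)).toNNReal wu (closedBall 0 r) :=
    lipschitzOnWith_sqrt_of_cone hbb fun x₁ h₁ x₂ h₂ hne ↦ by linarith [hu x₁ h₁ x₂ h₂ hne]
  have hK : (√(-ab / bb)).toNNReal * (√(-bf / af)).toNNReal < 1 := by
    rw [← Real.toNNReal_mul (Real.sqrt_nonneg _), Real.toNNReal_lt_one]
    exact sqrt_mul_sqrt_lt_one_of_abs_lt haf hbb hA hB
  obtain ⟨y, ⟨hy, hfy⟩, huniq⟩ := existsUnique_isFixedPt_of_lipschitzOnWith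
    isClosed_closedBall.isComplete (nonempty_closedBall.2 hr.le)
    ((hwum.mono_right ball_subset_closedBall).comp hws) hK
    (hwu_lip.comp (lipschitzOnWith_sqrt_of_cone haf hs) hws)
  have hy_ball : y ∈ ball (0 : Eu s) r := hfy ▸ hwum (hws hy)
  exact existsUnique_mem_graph_inter_of_existsUnique_isFixedPt
    (hwsm.mono_left ball_subset_closedBall)
    ⟨y, ⟨hy_ball, hfy⟩, fun z hz ↦ huniq z ⟨ball_subset_closedBall hz.1, hz.2⟩⟩

/-- Given contracting-graph conditions on `w^s : B̄_s(0,r) → B_u(0,r)` and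
`w^u : B̄_u(0,r) → B_s(0,r)` coming from the forward and backward cone conditions,
there is exactly one pair `(x₀,y₀) ∈ B_u(0,r) × B_s(0,r)` with `x₀ = w^s(y₀)` and
`y₀ = w^u(x₀)`. -/
theorem stmt7 {u s : ℕ} (r : ℝ) (hr : 0 < r)
    (ws : Eu s → Eu u) (wu : Eu u → Eu s)
    (hwsc : ContinuousOn ws (closedBall 0 r))
    (hwsm : MapsTo ws (closedBall 0 r) (ball 0 r))
    (hwuc : ContinuousOn wu (closedBall 0 r))
    (hwum : MapsTo wu (closedBall 0 r) (ball 0 r))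
    (af bf ab bb : ℝ) (haf : 0 < af) (hbf : bf < 0) (hab : ab < 0) (hbb : 0 < bb)
    (hA : |ab| < |af|) (hB : |bf| < |bb|)
    (hs : ∀ y₁ ∈ closedBall (0 : Eu s) r, ∀ y₂ ∈ closedBall (0 : Eu s) r, y₁ ≠ y₂ →
      af * ‖ws y₁ - ws y₂‖ ^ 2 + bf * ‖y₁ - y₂‖ ^ 2 < 0)
    (hu : ∀ x₁ ∈ closedBall (0 : Eu u) r, ∀ x₂ ∈ closedBall (0 : Eu u) r, x₁ ≠ x₂ →
      ab * ‖x₁ - x₂‖ ^ 2 + bb * ‖wu x₁ - wu x₂‖ ^ 2 < 0) :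
    ∃! p : Eu u × Eu s, p.1 ∈ ball (0 : Eu u) r ∧ p.2 ∈ ball (0 : Eu s) r ∧
      p.1 = ws p.2 ∧ p.2 = wu p.1 :=
  stmt7_general r hr ws wu hwsm hwum af bf ab bb haf hbb hA hB hs hu
end
end

section
/- Let γ_f = (a_f, b_f, c_f) with a_f > 0 and b_f, c_f < 0, and γ_b = (a_b, b_b, c_b) with a_b < 0, b_b > 0 and c_b < 0, satisfy a_f + a_b > 0 and b_f + b_b > 0. Let χ : B̄_c → ℝᵘ×ℝˢ be a map such that for all θ*, θ** ∈ B̄_c with θ* ≠ θ** one has Q_{γ_f}((χ(θ*),θ*) − (χ(θ**),θ**)) < 0 and Q_{γ_b}((χ(θ*),θ*) − (χ(θ**),θ**)) < 0. Then for all θ*, θ**: ‖χ(θ*) − χ(θ**)‖² ≤ (−(c_f + c_b)/min(a_f + a_b, b_f + b_b))·‖θ* − θ**‖²; in particular χ is Lipschitz continuous. -/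
open Metric Set

noncomputable section

/-! Adding the two cone inequalities cancels the indefinite signs of `a` and `b`: for
`γ = γ_f + γ_b` both `a` and `b` are positive, so `Q_γ(Δ) < 0` bounds `‖Δx‖² + ‖Δy‖²`
by a multiple of `‖Δθ‖²`. -/

theorem Qf_add {u s c : ℕ} (γ γ' : ℝ × ℝ × ℝ) (q : Pt u s c) :
    Qf (γ + γ') q = Qf γ q + Qf γ' q := by
  simp only [Qf, Prod.fst_add, Prod.snd_add]
  ring

theorem sq_norm_add_sq_norm_le_of_Qf_nonpos {u s c : ℕ} {γ : ℝ × ℝ × ℝ} {q : Pt u s c}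
    (ha : 0 < γ.1) (hb : 0 < γ.2.1) (hq : Qf γ q ≤ 0) :
    ‖q.1‖ ^ 2 + ‖q.2.1‖ ^ 2 ≤ -γ.2.2 / min γ.1 γ.2.1 * ‖q.2.2‖ ^ 2 := by
  have hm : 0 < min γ.1 γ.2.1 := lt_min ha hb
  rw [div_mul_eq_mul_div, le_div_iff₀ hm]
  unfold Qf at hq
  nlinarith [min_le_left γ.1 γ.2.1, min_le_right γ.1 γ.2.1, sq_nonneg ‖q.1‖,
    sq_nonneg ‖q.2.1‖]

theorem Prod.dist_sq_le_sq_norm_add_sq_norm {E F : Type*} [SeminormedAddCommGroup E]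
    [SeminormedAddCommGroup F] (p p' : E × F) :
    dist p p' ^ 2 ≤ ‖p.1 - p'.1‖ ^ 2 + ‖p.2 - p'.2‖ ^ 2 := by
  rw [Prod.dist_eq, dist_eq_norm, dist_eq_norm]
  rcases max_choice ‖p.1 - p'.1‖ ‖p.2 - p'.2‖ with h | h <;> rw [h] <;>
    nlinarith [sq_nonneg ‖p.1 - p'.1‖, sq_nonneg ‖p.2 - p'.2‖]

theorem LipschitzOnWith.of_dist_sq_le_mul {α β : Type*} [PseudoMetricSpace α]
    [PseudoMetricSpace β] {f : α → β} {s : Set α} {K : ℝ}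
    (h : ∀ x ∈ s, ∀ y ∈ s, dist (f x) (f y) ^ 2 ≤ K * dist x y ^ 2) :
    LipschitzOnWith (Real.sqrt K).toNNReal f s := by
  refine LipschitzOnWith.of_dist_le_mul fun x hx y hy => ?_
  rw [Real.coe_toNNReal _ (Real.sqrt_nonneg K)]
  calc dist (f x) (f y) = Real.sqrt (dist (f x) (f y) ^ 2) := (Real.sqrt_sq dist_nonneg).symm
    _ ≤ Real.sqrt (K * dist x y ^ 2) := Real.sqrt_le_sqrt (h x hx y hy)
    _ = Real.sqrt K * dist x y := by rw [Real.sqrt_mul' K (sq_nonneg _), Real.sqrt_sq dist_nonneg]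

theorem stmt8_general {u s c : ℕ} (γf γb : ℝ × ℝ × ℝ)
    (hsum1 : 0 < γf.1 + γb.1) (hsum2 : 0 < γf.2.1 + γb.2.1)
    (χ : Eu c → Eu u × Eu s)
    (hf : ∀ θ₁ ∈ closedBall (0 : Eu c) 1, ∀ θ₂ ∈ closedBall (0 : Eu c) 1, θ₁ ≠ θ₂ →
      Qf γf (((χ θ₁).1 - (χ θ₂).1, (χ θ₁).2 - (χ θ₂).2, θ₁ - θ₂) : Pt u s c) < 0)
    (hb : ∀ θ₁ ∈ closedBall (0 : Eu c) 1, ∀ θ₂ ∈ closedBall (0 : Eu c) 1, θ₁ ≠ θ₂ →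
      Qf γb (((χ θ₁).1 - (χ θ₂).1, (χ θ₁).2 - (χ θ₂).2, θ₁ - θ₂) : Pt u s c) < 0) :
    (∀ θ₁ ∈ closedBall (0 : Eu c) 1, ∀ θ₂ ∈ closedBall (0 : Eu c) 1,
      ‖(χ θ₁).1 - (χ θ₂).1‖ ^ 2 + ‖(χ θ₁).2 - (χ θ₂).2‖ ^ 2 ≤
        (-(γf.2.2 + γb.2.2) / min (γf.1 + γb.1) (γf.2.1 + γb.2.1)) * ‖θ₁ - θ₂‖ ^ 2) ∧
    LipschitzOnWith
      (Real.toNNReal (Real.sqrt (-(γf.2.2 + γb.2.2) / min (γf.1 + γb.1) (γf.2.1 + γb.2.1))))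
      χ (closedBall 0 1) := by
  have bound : ∀ θ₁ ∈ closedBall (0 : Eu c) 1, ∀ θ₂ ∈ closedBall (0 : Eu c) 1,
      ‖(χ θ₁).1 - (χ θ₂).1‖ ^ 2 + ‖(χ θ₁).2 - (χ θ₂).2‖ ^ 2 ≤
        (-(γf.2.2 + γb.2.2) / min (γf.1 + γb.1) (γf.2.1 + γb.2.1)) * ‖θ₁ - θ₂‖ ^ 2 := by
    intro θ₁ h₁ θ₂ h₂
    rcases eq_or_ne θ₁ θ₂ with rfl | hne
    · simp
    · have hsum := add_neg (hf θ₁ h₁ θ₂ h₂ hne) (hb θ₁ h₁ θ₂ h₂ hne)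
      rw [← Qf_add] at hsum
      simpa only [Prod.fst_add, Prod.snd_add] using
        sq_norm_add_sq_norm_le_of_Qf_nonpos (γ := γf + γb) hsum1 hsum2 hsum.le
  refine ⟨bound, LipschitzOnWith.of_dist_sq_le_mul fun θ₁ h₁ θ₂ h₂ => ?_⟩
  rw [dist_eq_norm θ₁ θ₂]
  exact (Prod.dist_sq_le_sq_norm_add_sq_norm _ _).trans (bound θ₁ h₁ θ₂ h₂)

/-- If the graph `θ ↦ (χ(θ),θ)` lies in the negative cones of both `Q_{γ_f}` and `Q_{γ_b}`,
with `a_f + a_b > 0` and `b_f + b_b > 0`, then `χ` satisfies the quadratic Lipschitz bound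
`‖Δχ‖² ≤ (-(c_f+c_b)/min(a_f+a_b, b_f+b_b))·‖Δθ‖²`; in particular `χ` is Lipschitz. -/
theorem stmt8 {u s c : ℕ} (γf γb : ℝ × ℝ × ℝ)
    (haf : 0 < γf.1) (hbf : γf.2.1 < 0) (hcf : γf.2.2 < 0)
    (hab : γb.1 < 0) (hbb : 0 < γb.2.1) (hcb : γb.2.2 < 0)
    (hsum1 : 0 < γf.1 + γb.1) (hsum2 : 0 < γf.2.1 + γb.2.1)
    (χ : Eu c → Eu u × Eu s)
    (hf : ∀ θ₁ ∈ closedBall (0 : Eu c) 1, ∀ θ₂ ∈ closedBall (0 : Eu c) 1, θ₁ ≠ θ₂ →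
      Qf γf (((χ θ₁).1 - (χ θ₂).1, (χ θ₁).2 - (χ θ₂).2, θ₁ - θ₂) : Pt u s c) < 0)
    (hb : ∀ θ₁ ∈ closedBall (0 : Eu c) 1, ∀ θ₂ ∈ closedBall (0 : Eu c) 1, θ₁ ≠ θ₂ →
      Qf γb (((χ θ₁).1 - (χ θ₂).1, (χ θ₁).2 - (χ θ₂).2, θ₁ - θ₂) : Pt u s c) < 0) :
    (∀ θ₁ ∈ closedBall (0 : Eu c) 1, ∀ θ₂ ∈ closedBall (0 : Eu c) 1,
      ‖(χ θ₁).1 - (χ θ₂).1‖ ^ 2 + ‖(χ θ₁).2 - (χ θ₂).2‖ ^ 2 ≤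
        (-(γf.2.2 + γb.2.2) / min (γf.1 + γb.1) (γf.2.1 + γb.2.1)) * ‖θ₁ - θ₂‖ ^ 2) ∧
    LipschitzOnWith
      (Real.toNNReal (Real.sqrt (-(γf.2.2 + γb.2.2) / min (γf.1 + γb.1) (γf.2.1 + γb.2.1))))
      χ (closedBall 0 1) :=
  stmt8_general γf γb hsum1 hsum2 χ hf hb
end
end

section
/- Let γ = (a,b,c) ∈ ℝ³ with a ≥ 0 and b, c ≤ 0, and let A : ℝᵘ⁺ˢ⁺ᶜ → ℝᵘ⁺ˢ⁺ᶜ be a linear map with block components A_{ij} (i,j ∈ {1,2,3}, blocks corresponding to the x, y, θ factors) satisfying ‖A_{ij}v‖ ≤ Ā_{ij}‖v‖ and ‖A_{ij}v‖ ≥ A̲_{ij}‖v‖ for all unit vectors v, for some nonnegative constants Ā_{ij}, A̲_{ij}. Define the 3×3 matrix C by c₁₁ = A̲₁₁² − Σ_{k≠1} Ā₁₁Ā₁ₖ, c₂₁ = A̲₁₂² − Σ_{k≠2} Ā₁₂Ā₁ₖ, c₃₁ = A̲₁₃² − Σ_{k≠3} Ā₁₃Ā₁ₖ, c₁₂ =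 Σ_{k=1}³ Ā₂₁Ā₂ₖ, c₂₂ = Σ_{k=1}³ Ā₂₂Ā₂ₖ, c₃₂ = Σ_{k=1}³ Ā₂₃Ā₂ₖ, c₁₃ = Σ_{k=1}³ Ā₃₁Ā₃ₖ, c₂₃ = Σ_{k=1}³ Ā₃₂Ā₃ₖ, c₃₃ = Σ_{k=1}³ Ā₃₃Ā₃ₖ. Then for every p = (p₁,p₂,p₃) ∈ ℝᵘ×ℝˢ×ℝᶜ one has Q_γ(Ap) ≥ Q_{Cγ}(p). -/
open Metric Set

noncomputable section

/-- The comparison matrix `C` built from block derivative bounds `Ā`, `A̲`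
(indices `0,1,2` correspond to the `x`, `y`, `θ` blocks). -/
def Cmat (Abar Alow : Fin 3 → Fin 3 → ℝ) : Matrix (Fin 3) (Fin 3) ℝ :=
  !![Alow 0 0 ^ 2 - (Abar 0 0 * Abar 0 1 + Abar 0 0 * Abar 0 2),
     Abar 1 0 * Abar 1 0 + Abar 1 0 * Abar 1 1 + Abar 1 0 * Abar 1 2,
     Abar 2 0 * Abar 2 0 + Abar 2 0 * Abar 2 1 + Abar 2 0 * Abar 2 2;
     Alow 0 1 ^ 2 - (Abar 0 1 * Abar 0 0 + Abar 0 1 * Abar 0 2),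
     Abar 1 1 * Abar 1 0 + Abar 1 1 * Abar 1 1 + Abar 1 1 * Abar 1 2,
     Abar 2 1 * Abar 2 0 + Abar 2 1 * Abar 2 1 + Abar 2 1 * Abar 2 2;
     Alow 0 2 ^ 2 - (Abar 0 2 * Abar 0 0 + Abar 0 2 * Abar 0 1),
     Abar 1 2 * Abar 1 0 + Abar 1 2 * Abar 1 1 + Abar 1 2 * Abar 1 2,
     Abar 2 2 * Abar 2 0 + Abar 2 2 * Abar 2 1 + Abar 2 2 * Abar 2 2]

/-!
Write `r = (‖x‖, ‖y‖, ‖θ‖)`. Since `a ≥ 0`, the `x`-component of `Ap` only needs a lower bound: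
expanding `‖A₁₁x + A₁₂y + A₁₃θ‖²` and estimating each inner product by Cauchy–Schwarz gives
`Σⱼ ‖A₁ⱼ·‖² - 2 Σ_{j<k} ‖A₁ⱼ·‖ ‖A₁ₖ·‖`. Since `b, c ≤ 0`, the other two components only need
upper bounds, which the triangle inequality gives as `(Σⱼ Āᵢⱼ rⱼ)²`. In both cases the cross terms
are removed by `2 rⱼ rₖ ≤ rⱼ² + rₖ²`, which leaves diagonal forms in `r²`; their coefficients
are the columns of `C`.
-/

/-- `Σⱼ Cⱼ₀ rⱼ²` for `L = A̲₀`, `U = Ā₀`. -/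
def lowerQuad (L U : Fin 3 → ℝ) (r₀ r₁ r₂ : ℝ) : ℝ :=
  (L 0 ^ 2 - (U 0 * U 1 + U 0 * U 2)) * r₀ ^ 2 + (L 1 ^ 2 - (U 1 * U 0 + U 1 * U 2)) * r₁ ^ 2 +
    (L 2 ^ 2 - (U 2 * U 0 + U 2 * U 1)) * r₂ ^ 2

/-- `Σⱼ Cⱼᵢ rⱼ²` for `U = Āᵢ`, `i = 1, 2`. -/
def upperQuad (U : Fin 3 → ℝ) (r₀ r₁ r₂ : ℝ) : ℝ :=
  (U 0 * U 0 + U 0 * U 1 + U 0 * U 2) * r₀ ^ 2 + (U 1 * U 0 + U 1 * U 1 + U 1 * U 2) * r₁ ^ 2 +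
    (U 2 * U 0 + U 2 * U 1 + U 2 * U 2) * r₂ ^ 2

lemma two_mul_cross_terms_le {U : Fin 3 → ℝ} (hU : ∀ i, 0 ≤ U i) (r₀ r₁ r₂ : ℝ) :
    2 * (U 0 * r₀ * (U 1 * r₁) + U 0 * r₀ * (U 2 * r₂) + U 1 * r₁ * (U 2 * r₂)) ≤
      (U 0 * U 1 + U 0 * U 2) * r₀ ^ 2 + (U 1 * U 0 + U 1 * U 2) * r₁ ^ 2 +
        (U 2 * U 0 + U 2 * U 1) * r₂ ^ 2 := by
  nlinarith [mul_nonneg (mul_nonneg (hU 0) (hU 1)) (sq_nonneg (r₀ - r₁)),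
    mul_nonneg (mul_nonneg (hU 0) (hU 2)) (sq_nonneg (r₀ - r₂)),
    mul_nonneg (mul_nonneg (hU 1) (hU 2)) (sq_nonneg (r₁ - r₂))]

lemma sq_add_add_le_upperQuad {U : Fin 3 → ℝ} (hU : ∀ i, 0 ≤ U i) (r₀ r₁ r₂ : ℝ) :
    (U 0 * r₀ + U 1 * r₁ + U 2 * r₂) ^ 2 ≤ upperQuad U r₀ r₁ r₂ := by
  unfold upperQuad
  linear_combination two_mul_cross_terms_le hU r₀ r₁ r₂

lemma norm_add_add_sq_ge {E : Type*} [NormedAddCommGroup E] [InnerProductSpace ℝ E]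
    (u v w : E) :
    ‖u‖ ^ 2 + ‖v‖ ^ 2 + ‖w‖ ^ 2 - 2 * (‖u‖ * ‖v‖ + ‖u‖ * ‖w‖ + ‖v‖ * ‖w‖) ≤ ‖u + v + w‖ ^ 2 := by
  have h_expand := norm_add_sq_real (u + v) w
  rw [norm_add_sq_real u v, inner_add_left] at h_expand
  have h_uv := (abs_le.mp (abs_real_inner_le_norm u v)).1
  have h_uw := (abs_le.mp (abs_real_inner_le_norm u w)).1
  have h_vw := (abs_le.mp (abs_real_inner_le_norm v w)).1
  linarith

section Blocks

variable {F : Type*} {L U : Fin 3 → ℝ} {r₀ r₁ r₂ : ℝ} {u₀ u₁ u₂ : F}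

lemma lowerQuad_le_norm_add_add_sq [NormedAddCommGroup F] [InnerProductSpace ℝ F]
    (hL : ∀ i, 0 ≤ L i) (hU : ∀ i, 0 ≤ U i) (hr₀ : 0 ≤ r₀) (hr₁ : 0 ≤ r₁) (hr₂ : 0 ≤ r₂)
    (hu₀ : ‖u₀‖ ≤ U 0 * r₀) (hu₁ : ‖u₁‖ ≤ U 1 * r₁) (hu₂ : ‖u₂‖ ≤ U 2 * r₂)
    (hl₀ : L 0 * r₀ ≤ ‖u₀‖) (hl₁ : L 1 * r₁ ≤ ‖u₁‖) (hl₂ : L 2 * r₂ ≤ ‖u₂‖) :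
    lowerQuad L U r₀ r₁ r₂ ≤ ‖u₀ + u₁ + u₂‖ ^ 2 := by
  have hsq₀ := pow_le_pow_left₀ (mul_nonneg (hL 0) hr₀) hl₀ 2
  have hsq₁ := pow_le_pow_left₀ (mul_nonneg (hL 1) hr₁) hl₁ 2
  have hsq₂ := pow_le_pow_left₀ (mul_nonneg (hL 2) hr₂) hl₂ 2
  have h₀₁ := mul_le_mul hu₀ hu₁ (norm_nonneg _) ((norm_nonneg _).trans hu₀)
  have h₀₂ := mul_le_mul hu₀ hu₂ (norm_nonneg _) ((norm_nonneg _).trans hu₀)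
  have h₁₂ := mul_le_mul hu₁ hu₂ (norm_nonneg _) ((norm_nonneg _).trans hu₁)
  have h_cross := two_mul_cross_terms_le hU r₀ r₁ r₂
  have h_expand := norm_add_add_sq_ge u₀ u₁ u₂
  unfold lowerQuad
  linarith

lemma norm_add_add_sq_le_upperQuad [SeminormedAddCommGroup F] (hU : ∀ i, 0 ≤ U i)
    (hu₀ : ‖u₀‖ ≤ U 0 * r₀) (hu₁ : ‖u₁‖ ≤ U 1 * r₁) (hu₂ : ‖u₂‖ ≤ U 2 * r₂) :
    ‖u₀ + u₁ + u₂‖ ^ 2 ≤ upperQuad U r₀ r₁ r₂ := by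
  have h_triangle : ‖u₀ + u₁ + u₂‖ ≤ U 0 * r₀ + U 1 * r₁ + U 2 * r₂ :=
    (norm_add₃_le).trans (by linarith)
  exact (pow_le_pow_left₀ (norm_nonneg _) h_triangle 2).trans (sq_add_add_le_upperQuad hU _ _ _)

end Blocks

lemma Qf_Cmat_mulVec {u s c : ℕ} (Abar Alow : Fin 3 → Fin 3 → ℝ) (γ : ℝ × ℝ × ℝ)
    (p : Pt u s c) :
    Qf (((Cmat Abar Alow).mulVec ![γ.1, γ.2.1, γ.2.2] 0,
         (Cmat Abar Alow).mulVec ![γ.1, γ.2.1, γ.2.2] 1,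
         (Cmat Abar Alow).mulVec ![γ.1, γ.2.1, γ.2.2] 2) : ℝ × ℝ × ℝ) p =
      γ.1 * lowerQuad (Alow 0) (Abar 0) ‖p.1‖ ‖p.2.1‖ ‖p.2.2‖ +
        γ.2.1 * upperQuad (Abar 1) ‖p.1‖ ‖p.2.1‖ ‖p.2.2‖ +
        γ.2.2 * upperQuad (Abar 2) ‖p.1‖ ‖p.2.1‖ ‖p.2.2‖ := by
  simp only [Qf, Cmat, lowerQuad, upperQuad, Matrix.mulVec, dotProduct, Fin.sum_univ_three,
    Matrix.of_apply, Matrix.cons_val', Matrix.cons_val_zero, Matrix.cons_val_one,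
    Matrix.cons_val_two, Matrix.head_cons, Matrix.tail_cons, Matrix.head_fin_const,
    Matrix.empty_val', Matrix.cons_val_fin_one]
  ring

theorem stmt10_general {u s c : ℕ} (γ : ℝ × ℝ × ℝ)
    (ha : 0 ≤ γ.1) (hbneg : γ.2.1 ≤ 0) (hcneg : γ.2.2 ≤ 0)
    (A11 : Eu u →ₗ[ℝ] Eu u) (A12 : Eu s →ₗ[ℝ] Eu u) (A13 : Eu c →ₗ[ℝ] Eu u)
    (A21 : Eu u →ₗ[ℝ] Eu s) (A22 : Eu s →ₗ[ℝ] Eu s) (A23 : Eu c →ₗ[ℝ] Eu s)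
    (A31 : Eu u →ₗ[ℝ] Eu c) (A32 : Eu s →ₗ[ℝ] Eu c) (A33 : Eu c →ₗ[ℝ] Eu c)
    (Abar Alow : Fin 3 → Fin 3 → ℝ)
    (hAbarNN : ∀ i j, 0 ≤ Abar i j) (hAlowNN : ∀ i j, 0 ≤ Alow i j)
    (h11u : ∀ v : Eu u, ‖A11 v‖ ≤ Abar 0 0 * ‖v‖) (h11l : ∀ v : Eu u, Alow 0 0 * ‖v‖ ≤ ‖A11 v‖)
    (h12u : ∀ v : Eu s, ‖A12 v‖ ≤ Abar 0 1 * ‖v‖) (h12l : ∀ v : Eu s, Alow 0 1 * ‖v‖ ≤ ‖A12 v‖)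
    (h13u : ∀ v : Eu c, ‖A13 v‖ ≤ Abar 0 2 * ‖v‖) (h13l : ∀ v : Eu c, Alow 0 2 * ‖v‖ ≤ ‖A13 v‖)
    (h21u : ∀ v : Eu u, ‖A21 v‖ ≤ Abar 1 0 * ‖v‖)
    (h22u : ∀ v : Eu s, ‖A22 v‖ ≤ Abar 1 1 * ‖v‖)
    (h23u : ∀ v : Eu c, ‖A23 v‖ ≤ Abar 1 2 * ‖v‖)
    (h31u : ∀ v : Eu u, ‖A31 v‖ ≤ Abar 2 0 * ‖v‖)
    (h32u : ∀ v : Eu s, ‖A32 v‖ ≤ Abar 2 1 * ‖v‖)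
    (h33u : ∀ v : Eu c, ‖A33 v‖ ≤ Abar 2 2 * ‖v‖)
    (p : Pt u s c) :
    Qf (((Cmat Abar Alow).mulVec ![γ.1, γ.2.1, γ.2.2] 0,
         (Cmat Abar Alow).mulVec ![γ.1, γ.2.1, γ.2.2] 1,
         (Cmat Abar Alow).mulVec ![γ.1, γ.2.1, γ.2.2] 2) : ℝ × ℝ × ℝ) p ≤
      Qf γ ((A11 p.1 + A12 p.2.1 + A13 p.2.2,
             A21 p.1 + A22 p.2.1 + A23 p.2.2,
             A31 p.1 + A32 p.2.1 + A33 p.2.2) : Pt u s c) := by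
  obtain ⟨x, y, θ⟩ := p
  have h_first : lowerQuad (Alow 0) (Abar 0) ‖x‖ ‖y‖ ‖θ‖ ≤ ‖A11 x + A12 y + A13 θ‖ ^ 2 :=
    lowerQuad_le_norm_add_add_sq (hAlowNN 0) (hAbarNN 0) (norm_nonneg x) (norm_nonneg y)
      (norm_nonneg θ) (h11u x) (h12u y) (h13u θ) (h11l x) (h12l y) (h13l θ)
  have h_second : ‖A21 x + A22 y + A23 θ‖ ^ 2 ≤ upperQuad (Abar 1) ‖x‖ ‖y‖ ‖θ‖ :=
    norm_add_add_sq_le_upperQuad (hAbarNN 1) (h21u x) (h22u y) (h23u θ)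
  have h_third : ‖A31 x + A32 y + A33 θ‖ ^ 2 ≤ upperQuad (Abar 2) ‖x‖ ‖y‖ ‖θ‖ :=
    norm_add_add_sq_le_upperQuad (hAbarNN 2) (h31u x) (h32u y) (h33u θ)
  rw [Qf_Cmat_mulVec]
  exact add_le_add (add_le_add (mul_le_mul_of_nonneg_left h_first ha)
    (mul_le_mul_of_nonpos_left h_second hbneg)) (mul_le_mul_of_nonpos_left h_third hcneg)

/-- quadratic form comparison for block linear maps.
If `A` is a block linear map with block norm bounds `Ā_{ij}`, `A̲_{ij}` and `γ = (a,b,c)`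
with `a ≥ 0 ≥ b,c`, then `Q_γ(Ap) ≥ Q_{Cγ}(p)` for every `p`. -/
theorem stmt10 {u s c : ℕ} (γ : ℝ × ℝ × ℝ)
    (ha : 0 ≤ γ.1) (hbneg : γ.2.1 ≤ 0) (hcneg : γ.2.2 ≤ 0)
    (A11 : Eu u →ₗ[ℝ] Eu u) (A12 : Eu s →ₗ[ℝ] Eu u) (A13 : Eu c →ₗ[ℝ] Eu u)
    (A21 : Eu u →ₗ[ℝ] Eu s) (A22 : Eu s →ₗ[ℝ] Eu s) (A23 : Eu c →ₗ[ℝ] Eu s)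
    (A31 : Eu u →ₗ[ℝ] Eu c) (A32 : Eu s →ₗ[ℝ] Eu c) (A33 : Eu c →ₗ[ℝ] Eu c)
    (Abar Alow : Fin 3 → Fin 3 → ℝ)
    (hAbarNN : ∀ i j, 0 ≤ Abar i j) (hAlowNN : ∀ i j, 0 ≤ Alow i j)
    (h11u : ∀ v : Eu u, ‖A11 v‖ ≤ Abar 0 0 * ‖v‖) (h11l : ∀ v : Eu u, Alow 0 0 * ‖v‖ ≤ ‖A11 v‖)
    (h12u : ∀ v : Eu s, ‖A12 v‖ ≤ Abar 0 1 * ‖v‖) (h12l : ∀ v : Eu s, Alow 0 1 * ‖v‖ ≤ ‖A12 v‖)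
    (h13u : ∀ v : Eu c, ‖A13 v‖ ≤ Abar 0 2 * ‖v‖) (h13l : ∀ v : Eu c, Alow 0 2 * ‖v‖ ≤ ‖A13 v‖)
    (h21u : ∀ v : Eu u, ‖A21 v‖ ≤ Abar 1 0 * ‖v‖) (h21l : ∀ v : Eu u, Alow 1 0 * ‖v‖ ≤ ‖A21 v‖)
    (h22u : ∀ v : Eu s, ‖A22 v‖ ≤ Abar 1 1 * ‖v‖) (h22l : ∀ v : Eu s, Alow 1 1 * ‖v‖ ≤ ‖A22 v‖)
    (h23u : ∀ v : Eu c, ‖A23 v‖ ≤ Abar 1 2 * ‖v‖) (h23l : ∀ v : Eu c, Alow 1 2 * ‖v‖ ≤ ‖A23 v‖)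
    (h31u : ∀ v : Eu u, ‖A31 v‖ ≤ Abar 2 0 * ‖v‖) (h31l : ∀ v : Eu u, Alow 2 0 * ‖v‖ ≤ ‖A31 v‖)
    (h32u : ∀ v : Eu s, ‖A32 v‖ ≤ Abar 2 1 * ‖v‖) (h32l : ∀ v : Eu s, Alow 2 1 * ‖v‖ ≤ ‖A32 v‖)
    (h33u : ∀ v : Eu c, ‖A33 v‖ ≤ Abar 2 2 * ‖v‖) (h33l : ∀ v : Eu c, Alow 2 2 * ‖v‖ ≤ ‖A33 v‖)
    (p : Pt u s c) :
    Qf (((Cmat Abar Alow).mulVec ![γ.1, γ.2.1, γ.2.2] 0,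
         (Cmat Abar Alow).mulVec ![γ.1, γ.2.1, γ.2.2] 1,
         (Cmat Abar Alow).mulVec ![γ.1, γ.2.1, γ.2.2] 2) : ℝ × ℝ × ℝ) p ≤
      Qf γ ((A11 p.1 + A12 p.2.1 + A13 p.2.2,
             A21 p.1 + A22 p.2.1 + A23 p.2.2,
             A31 p.1 + A32 p.2.1 + A33 p.2.2) : Pt u s c) :=
  stmt10_general γ ha hbneg hcneg A11 A12 A13 A21 A22 A23 A31 A32 A33 Abar Alow hAbarNN hAlowNN h11u
    h11l h12u h12l h13u h13l h21u h22u h23u h31u h32u h33u p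
end
end

section
/- Let r > 0, n ≥ 1, and let h : [0,r] → ℝ be (n+1)-times continuously differentiable. Define the polynomials p̄(θ) := Σ_{j=0}^{n−1} (h⁽ʲ⁾(0)/j!)·θʲ + (1/n!)·[h⁽ⁿ⁾(0) + (1/(n+1))·sup_{v,w ∈ [0,r]} h⁽ⁿ⁺¹⁾(v)·w]·θⁿ and p̲(θ) := Σ_{j=0}^{n−1} (h⁽ʲ⁾(0)/j!)·θʲ + (1/n!)·[h⁽ⁿ⁾(0) + (1/(n+1))·inf_{v,w ∈ [0,r]} h⁽ⁿ⁺¹⁾(v)·w]·θⁿ. Then p̲(θ) ≤ h(θ) ≤ p̄(θ) for every θ ∈ [0,r]. -/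
/-!
Taylor's formula with Lagrange remainder gives `h θ = Tₙ(θ) + h⁽ⁿ⁺¹⁾(ξ) θⁿ⁺¹ / (n+1)!` for some
`ξ ∈ [0, θ]`. Writing `θⁿ⁺¹ = θ · θⁿ`, the number `h⁽ⁿ⁺¹⁾(ξ) · θ` is one of the products over
which the infimum and supremum are taken (a compact set of reals), and its coefficient
`θⁿ / (n+1)!` is nonnegative.
-/

open Set Filter Topology Nat

theorem IsCompact.setOf_exists_mul {X M : Type*} [TopologicalSpace X] [TopologicalSpace M]
    [Mul M] [ContinuousMul M] {s : Set X} {t : Set M} (hs : IsCompact s) (ht : IsCompact t)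
    {g : X → M} (hg : ContinuousOn g s) :
    IsCompact {x : M | ∃ v ∈ s, ∃ w ∈ t, x = g v * w} := by
  convert (hs.image_of_continuousOn hg).mul ht using 1
  ext x
  constructor
  · rintro ⟨v, hv, w, hw, rfl⟩
    exact ⟨g v, mem_image_of_mem g hv, w, hw, rfl⟩
  · rintro ⟨_, ⟨v, hv, rfl⟩, w, hw, rfl⟩
    exact ⟨v, hv, w, hw, rfl⟩

theorem iteratedDerivWithin_Icc_eq_of_mem_Ico {f : ℝ → ℝ} {a b x y : ℝ} (hxb : x ≤ b)
    (hy : y ∈ Ico a x) (m : ℕ) :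
    iteratedDerivWithin m f (Icc a x) y = iteratedDerivWithin m f (Icc a b) y := by
  have hset : Icc a x =ᶠ[𝓝 y] Icc a b := by
    filter_upwards [Iio_mem_nhds hy.2] with z hz
    exact propext ⟨fun hz' => ⟨hz'.1, hz'.2.trans hxb⟩, fun hz' => ⟨hz'.1, (mem_Iio.1 hz).le⟩⟩
  simp only [iteratedDerivWithin_eq_iteratedFDerivWithin, iteratedFDerivWithin_congr_set hset m]

theorem taylorWithinEval_Icc_eq {f : ℝ → ℝ} {a b x : ℝ} (hax : a < x) (hxb : x ≤ b)
    (n : ℕ) (y : ℝ) :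
    taylorWithinEval f n (Icc a x) a y = taylorWithinEval f n (Icc a b) a y := by
  simp only [taylor_within_apply,
    iteratedDerivWithin_Icc_eq_of_mem_Ico hxb (left_mem_Ico.2 hax)]

theorem exists_taylor_mean_remainder_lagrange_Icc {f : ℝ → ℝ} {a b x : ℝ} {n : ℕ}
    (hf : ContDiffOn ℝ (n + 1 : ℕ) f (Icc a b)) (hx : x ∈ Icc a b) :
    ∃ ξ ∈ Icc a x, f x - taylorWithinEval f n (Icc a b) a x =
      iteratedDerivWithin (n + 1) f (Icc a b) ξ * (x - a) ^ (n + 1) / (n + 1)! := by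
  rcases hx.1.eq_or_lt with rfl | hax
  · exact ⟨a, left_mem_Icc.2 le_rfl, by simp⟩
  have hfx : ContDiffOn ℝ (n + 1 : ℕ) f (Icc a x) := hf.mono (Icc_subset_Icc_right hx.2)
  have hf' : DifferentiableOn ℝ (iteratedDerivWithin n f (Icc a x)) (Ioo a x) :=
    (hfx.differentiableOn_iteratedDerivWithin (by exact_mod_cast n.lt_succ_self)
      (uniqueDiffOn_Icc hax)).mono Ioo_subset_Icc_self
  obtain ⟨ξ, hξ, hrem⟩ := taylor_mean_remainder_lagrange hax.ne
    (by rw [uIcc_of_le hax.le]; exact hfx.of_succ) (by rwa [uIcc_of_le hax.le, uIoo_of_le hax.le])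
  rw [uIoo_of_le hax.le] at hξ
  rw [uIcc_of_le hax.le, taylorWithinEval_Icc_eq hax hx.2,
    iteratedDerivWithin_Icc_eq_of_mem_Ico hx.2 ⟨hξ.1.le, hξ.2⟩] at hrem
  exact ⟨ξ, Ioo_subset_Icc_self hξ, hrem⟩

theorem taylorWithinEval_eq_sum (f : ℝ → ℝ) (n : ℕ) (s : Set ℝ) (a x : ℝ) :
    taylorWithinEval f n s a x =
      ∑ k ∈ Finset.range (n + 1), iteratedDerivWithin k f s a / k ! * (x - a) ^ k := by
  simp only [taylor_within_apply, smul_eq_mul]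
  exact Finset.sum_congr rfl fun k _ => by ring

theorem stmt15_general (r : ℝ) (hr : 0 < r) (n : ℕ) (h : ℝ → ℝ)
    (hh : ContDiffOn ℝ (n + 1 : ℕ) h (Set.Icc 0 r)) :
    ∀ θ ∈ Set.Icc (0 : ℝ) r,
      (∑ j ∈ Finset.range n,
          (iteratedDerivWithin j h (Set.Icc 0 r) 0 / (j.factorial : ℝ)) * θ ^ j) +
        (1 / (n.factorial : ℝ)) *
          (iteratedDerivWithin n h (Set.Icc 0 r) 0 +
            (1 / ((n : ℝ) + 1)) *
              sInf {x : ℝ | ∃ v ∈ Set.Icc (0 : ℝ) r, ∃ w ∈ Set.Icc (0 : ℝ) r,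
                x = iteratedDerivWithin (n + 1) h (Set.Icc 0 r) v * w}) * θ ^ n
        ≤ h θ ∧
      h θ ≤
        (∑ j ∈ Finset.range n,
            (iteratedDerivWithin j h (Set.Icc 0 r) 0 / (j.factorial : ℝ)) * θ ^ j) +
          (1 / (n.factorial : ℝ)) *
            (iteratedDerivWithin n h (Set.Icc 0 r) 0 +
              (1 / ((n : ℝ) + 1)) *
                sSup {x : ℝ | ∃ v ∈ Set.Icc (0 : ℝ) r, ∃ w ∈ Set.Icc (0 : ℝ) r,
                  x = iteratedDerivWithin (n + 1) h (Set.Icc 0 r) v * w}) * θ ^ n := by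
  intro θ hθ
  set D := fun k => iteratedDerivWithin k h (Icc 0 r)
  set S := {x : ℝ | ∃ v ∈ Icc (0 : ℝ) r, ∃ w ∈ Icc (0 : ℝ) r, x = D (n + 1) v * w}
  obtain ⟨ξ, hξ, hrem⟩ := exists_taylor_mean_remainder_lagrange_Icc hh hθ
  have hS : IsCompact S := isCompact_Icc.setOf_exists_mul isCompact_Icc
    (hh.continuousOn_iteratedDerivWithin le_rfl (uniqueDiffOn_Icc hr))
  have hmem : D (n + 1) ξ * θ ∈ S := ⟨ξ, Icc_subset_Icc_right hθ.2 hξ, θ, hθ, rfl⟩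
  have hpoly : ∀ c : ℝ, (∑ j ∈ Finset.range n, D j 0 / j ! * θ ^ j) +
      1 / n ! * (D n 0 + 1 / (n + 1) * c) * θ ^ n =
      h θ + (c - D (n + 1) ξ * θ) * (θ ^ n / (n + 1)!) := by
    intro c
    rw [taylorWithinEval_eq_sum, Finset.sum_range_succ, sub_zero] at hrem
    generalize ∑ j ∈ Finset.range n, D j 0 / j ! * θ ^ j = T at hrem ⊢
    rw [Nat.factorial_succ] at hrem ⊢
    push_cast at hrem ⊢
    field_simp at hrem ⊢
    linear_combination -hrem
  have hθn : 0 ≤ θ ^ n / (n + 1)! := by have := hθ.1; positivity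
  rw [hpoly, hpoly]
  exact ⟨add_le_of_nonpos_right <| mul_nonpos_of_nonpos_of_nonneg
      (sub_nonpos.2 <| csInf_le hS.bddBelow hmem) hθn,
    le_add_of_nonneg_right <| mul_nonneg (sub_nonneg.2 <| le_csSup hS.bddAbove hmem) hθn⟩

/-- Taylor polynomial enclosures.
For an `(n+1)`-times continuously differentiable `h : [0,r] → ℝ`, the polynomials `p̄` and `p̲`
obtained from the Taylor expansion at `0`, with the `θⁿ` coefficient corrected by
`sup`/`inf` of `h⁽ⁿ⁺¹⁾(v)·w` over `v,w ∈ [0,r]`, enclose `h` on `[0,r]`. -/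
theorem stmt15 (r : ℝ) (hr : 0 < r) (n : ℕ) (hn : 1 ≤ n) (h : ℝ → ℝ)
    (hh : ContDiffOn ℝ (n + 1 : ℕ) h (Set.Icc 0 r)) :
    ∀ θ ∈ Set.Icc (0 : ℝ) r,
      (∑ j ∈ Finset.range n,
          (iteratedDerivWithin j h (Set.Icc 0 r) 0 / (j.factorial : ℝ)) * θ ^ j) +
        (1 / (n.factorial : ℝ)) *
          (iteratedDerivWithin n h (Set.Icc 0 r) 0 +
            (1 / ((n : ℝ) + 1)) *
              sInf {x : ℝ | ∃ v ∈ Set.Icc (0 : ℝ) r, ∃ w ∈ Set.Icc (0 : ℝ) r,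
                x = iteratedDerivWithin (n + 1) h (Set.Icc 0 r) v * w}) * θ ^ n
        ≤ h θ ∧
      h θ ≤
        (∑ j ∈ Finset.range n,
            (iteratedDerivWithin j h (Set.Icc 0 r) 0 / (j.factorial : ℝ)) * θ ^ j) +
          (1 / (n.factorial : ℝ)) *
            (iteratedDerivWithin n h (Set.Icc 0 r) 0 +
              (1 / ((n : ℝ) + 1)) *
                sSup {x : ℝ | ∃ v ∈ Set.Icc (0 : ℝ) r, ∃ w ∈ Set.Icc (0 : ℝ) r,
                  x = iteratedDerivWithin (n + 1) h (Set.Icc 0 r) v * w}) * θ ^ n :=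
  stmt15_general r hr n h hh
end

section
/- Let a₀ and ε be real numbers with 0 < ε < a₀ − 1. Then ∫₀¹ (1/2)·log(4·(a₀ − 1 + ε·sin(2πθ))) dθ = (1/2)·log(2·(a₀ − 1 + √((a₀−1)² − ε²))). -/
/-!
Writing `s = √(b² - ε²)` and `c = ε / (b + s)`, one has `|c| < 1` and
`b + ε sin t = ((b + s) / 2) · |e^{it} + i c|²`. Since `log |z - a|` averages to `0` over the unit
circle when `|a| < 1`, the average of `log (b + ε sin t)` over a period is `log ((b + s) / 2)`.
The theorem is the case `b = 4 (a₀ - 1)`, `ε ↦ 4 ε`, after rescaling `[0, 1]` to `[0, 2π]`.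
-/

open Real intervalIntegral

lemma norm_circleMap_zero_one_add_mul_I_sq (c t : ℝ) :
    ‖circleMap 0 1 t + c * Complex.I‖ ^ 2 = 1 + c ^ 2 + 2 * c * sin t := by
  rw [Complex.sq_norm, Complex.normSq_apply]
  simp only [Complex.add_re, Complex.add_im, circleMap_zero_re, circleMap_zero_im,
    Complex.re_ofReal_mul, Complex.im_ofReal_mul, Complex.I_re, Complex.I_im]
  linear_combination sin_sq_add_cos_sq t

-- `K = (b + s) / 2` and `c = ε / (b + s)` solve `K (1 + c²) = b`, `2 K c = ε` with `|c| < 1`.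
lemma add_mul_sin_eq_mul_norm_circleMap_add_sq {b ε : ℝ} (h : |ε| < b) (t : ℝ) :
    b + ε * sin t = (b + √(b ^ 2 - ε ^ 2)) / 2 *
      ‖circleMap 0 1 t + (ε / (b + √(b ^ 2 - ε ^ 2)) : ℝ) * Complex.I‖ ^ 2 := by
  rw [norm_circleMap_zero_one_add_mul_I_sq]
  have hs : √(b ^ 2 - ε ^ 2) ^ 2 = b ^ 2 - ε ^ 2 :=
    sq_sqrt (by nlinarith [sq_abs ε, abs_nonneg ε])
  have hpos : 0 < b + √(b ^ 2 - ε ^ 2) := by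
    linarith [abs_nonneg ε, sqrt_nonneg (b ^ 2 - ε ^ 2)]
  field_simp
  linear_combination (-1 : ℝ) * hs

theorem integral_log_add_mul_sin {b ε : ℝ} (h : |ε| < b) :
    ∫ t in (0)..(2 * π), log (b + ε * sin t) = 2 * π * log ((b + √(b ^ 2 - ε ^ 2)) / 2) := by
  set s := √(b ^ 2 - ε ^ 2)
  have hpos : 0 < b + s := by linarith [abs_nonneg ε, sqrt_nonneg (b ^ 2 - ε ^ 2)]
  set a : ℂ := -((ε / (b + s) : ℝ) * Complex.I)
  have ha : ‖a‖ < 1 := by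
    rw [norm_neg, norm_mul, Complex.norm_I, mul_one, Complex.norm_real, norm_div,
      norm_of_nonneg hpos.le, div_lt_one hpos, Real.norm_eq_abs]
    linarith [sqrt_nonneg (b ^ 2 - ε ^ 2)]
  have hpoint (t : ℝ) :
      log (b + ε * sin t) = log ((b + s) / 2) + 2 * log ‖circleMap 0 1 t - a‖ := by
    have hne : circleMap 0 1 t - a ≠ 0 := sub_ne_zero.mpr fun h0 => by
      rw [← h0, norm_circleMap_zero, abs_one] at ha
      exact lt_irrefl _ ha
    rw [sub_neg_eq_add] at hne
    rw [add_mul_sin_eq_mul_norm_circleMap_add_sq h, log_mul (by positivity) (by positivity),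
      log_pow, sub_neg_eq_add]
    push_cast
    ring
  have hzero : ∫ t in (0)..(2 * π), log ‖circleMap 0 1 t - a‖ = 0 := by
    have := circleAverage_log_norm_sub_const₀ ha
    rw [circleAverage_def, smul_eq_zero] at this
    exact this.resolve_left (by positivity)
  rw [integral_congr fun t _ => hpoint t, integral_add intervalIntegrable_const
    ((circleIntegrable_log_norm_sub_const 1).const_mul 2), integral_const_mul, hzero]
  simp

/-- average of the Lyapunov-exponent integrand.
For `0 < ε < a₀ - 1`,
`∫₀¹ ½ log(4(a₀ - 1 + ε sin(2πθ))) dθ = ½ log(2(a₀ - 1 + √((a₀-1)² - ε²)))`. -/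
theorem stmt16 (a₀ ε : ℝ) (hε : 0 < ε) (hεa : ε < a₀ - 1) :
    ∫ θ in (0 : ℝ)..1,
        (1 / 2) * Real.log (4 * (a₀ - 1 + ε * Real.sin (2 * Real.pi * θ))) =
      (1 / 2) * Real.log (2 * (a₀ - 1 + Real.sqrt ((a₀ - 1) ^ 2 - ε ^ 2))) := by
  have h : |4 * ε| < 4 * (a₀ - 1) := by rw [abs_of_pos (by positivity)]; linarith
  have hsqrt : √((4 * (a₀ - 1)) ^ 2 - (4 * ε) ^ 2) = 4 * √((a₀ - 1) ^ 2 - ε ^ 2) := by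
    rw [show (4 * (a₀ - 1)) ^ 2 - (4 * ε) ^ 2 = 4 ^ 2 * ((a₀ - 1) ^ 2 - ε ^ 2) by ring,
      sqrt_mul (by positivity), sqrt_sq (by norm_num)]
  have hrescale := integral_comp_mul_left
    (fun t => log (4 * (a₀ - 1) + 4 * ε * sin t)) (c := 2 * π) (a := 0) (b := 1) (by positivity)
  rw [mul_zero, mul_one, integral_log_add_mul_sin h, hsqrt] at hrescale
  simp only [integral_const_mul, mul_add, ← mul_assoc, hrescale, smul_eq_mul]
  field_simp
  congr 1
  ring
end

section
/- Let γ₁ = (a₁,b₁,c₁) ∈ ℝ³ with a₁ > 0 and b₁, c₁ < 0, let r > 0, and let h : B̄_u(0,r) → ℝᵘ×ℝˢ×ℝᶜ be a map with π_x(h(x)) = x for all x and Q_{γ₁}(h(x*) − h(x**)) ≥ 0 for all x*, x** ∈ B̄_u(0,r). Set θ₀ := π_θ(h(0)). Then π_θ(h(B̄_u(0,r))) ⊂ B̄_c(θ₀, √(a₁/(−c₁))·r). -/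
open Metric Set

noncomputable section

theorem norm_snd_snd_le_of_Qf_nonneg {u s c : ℕ} {γ : ℝ × ℝ × ℝ} (ha : 0 ≤ γ.1)
    (hb : γ.2.1 ≤ 0) (hc : γ.2.2 < 0) {q : Pt u s c} (hq : 0 ≤ Qf γ q) :
    ‖q.2.2‖ ≤ Real.sqrt (γ.1 / -γ.2.2) * ‖q.1‖ := by
  have hy : γ.2.1 * ‖q.2.1‖ ^ 2 ≤ 0 := mul_nonpos_of_nonpos_of_nonneg hb (sq_nonneg _)
  have hθ : ‖q.2.2‖ ^ 2 ≤ γ.1 / -γ.2.2 * ‖q.1‖ ^ 2 := by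
    rw [div_mul_eq_mul_div, le_div_iff₀ (neg_pos.mpr hc)]
    unfold Qf at hq
    linarith
  calc ‖q.2.2‖ ≤ Real.sqrt (γ.1 / -γ.2.2 * ‖q.1‖ ^ 2) :=
        Real.le_sqrt_of_sq_le hθ
    _ = Real.sqrt (γ.1 / -γ.2.2) * ‖q.1‖ := by
        rw [Real.sqrt_mul (div_nonneg ha (neg_nonneg.mpr hc.le)), Real.sqrt_sq (norm_nonneg _)]

theorem stmt19_general {u s c : ℕ} (γ₁ : ℝ × ℝ × ℝ) (hγ₁ : ConePar γ₁) (r : ℝ)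
    (h : Eu u → Pt u s c)
    (hproj : ∀ x ∈ closedBall (0 : Eu u) r, (h x).1 = x)
    (hcone : ∀ x₁ ∈ closedBall (0 : Eu u) r, ∀ x₂ ∈ closedBall (0 : Eu u) r,
      0 ≤ Qf γ₁ (h x₁ - h x₂)) :
    ∀ x ∈ closedBall (0 : Eu u) r,
      (h x).2.2 ∈ closedBall ((h 0).2.2) (Real.sqrt (γ₁.1 / (-γ₁.2.2)) * r) := by
  intro x hx
  obtain ⟨ha, hb, hc⟩ := hγ₁
  have hxr : ‖x‖ ≤ r := mem_closedBall_zero_iff.mp hx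
  have h0 : (0 : Eu u) ∈ closedBall (0 : Eu u) r := mem_closedBall_self ((norm_nonneg x).trans hxr)
  have hfst : (h x - h 0).1 = x := by rw [Prod.fst_sub, hproj x hx, hproj 0 h0, sub_zero]
  have hθ := norm_snd_snd_le_of_Qf_nonneg ha.le hb.le hc (hcone x hx 0 h0)
  rw [hfst] at hθ
  rw [mem_closedBall, dist_eq_norm]
  exact hθ.trans (mul_le_mul_of_nonneg_left hxr (Real.sqrt_nonneg _))

/-- For a horizontal-disc-like map `h` with `π_x ∘ h = id` and increments in the cone
`Q_{γ₁} ≥ 0`, the `θ`-component of the image of `B̄_u(0,r)` stays in the ball of radius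
`√(a₁/(-c₁))·r` around `θ₀ = π_θ(h(0))`. -/
theorem stmt19 {u s c : ℕ} (γ₁ : ℝ × ℝ × ℝ) (hγ₁ : ConePar γ₁) (r : ℝ) (hr : 0 < r)
    (h : Eu u → Pt u s c)
    (hproj : ∀ x ∈ closedBall (0 : Eu u) r, (h x).1 = x)
    (hcone : ∀ x₁ ∈ closedBall (0 : Eu u) r, ∀ x₂ ∈ closedBall (0 : Eu u) r,
      0 ≤ Qf γ₁ (h x₁ - h x₂)) :
    ∀ x ∈ closedBall (0 : Eu u) r,
      (h x).2.2 ∈ closedBall ((h 0).2.2) (Real.sqrt (γ₁.1 / (-γ₁.2.2)) * r) :=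
  stmt19_general γ₁ hγ₁ r h hproj hcone
end
end
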